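/- Hardy inequality with trigonometric weight on (0,π): for every g ∈ H¹₀((0,π)) (in particular, for every smooth g with compact support contained in the open interval (0,π)) one has ∫₀^π |g'(θ)|² dθ ≥ (1/4) ∫₀^π |g(θ)|² / sin²θ dθ + (1/4) ∫₀^π |g(θ)|² dθ. -/

import Mathlib

open MeasureTheory Real Set

noncomputable section

namespace HardyAux

variable (g : ℝ → ℂ)

/-- The logarithmic-derivative weight `φ θ = cos θ / (2 sin θ)`. -/
def phi (θ : ℝ) : ℝ := Real.cos θ / (2 * Real.sin θ)

/-- The auxiliary function `F = φ · ‖g‖²` used for integration by parts. -/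
def FF (θ : ℝ) : ℝ := phi θ * ‖g θ‖ ^ 2

/-- The claimed derivative of `F`. -/
def DD (θ : ℝ) : ℝ :=
  -(1 / (2 * Real.sin θ ^ 2)) * ‖g θ‖ ^ 2
    + phi θ * (2 * ((starRingEnd ℂ) (g θ) * deriv g θ).re)

lemma norm_sq_eq (z : ℂ) : ‖z‖ ^ 2 = ((starRingEnd ℂ) z * z).re := by
  simp [Complex.mul_re, Complex.sq_norm, Complex.normSq_apply]

lemma phi_hasDerivAt {θ : ℝ} (hθ : θ ∈ Ioo 0 π) :
    HasDerivAt phi (-(1 / (2 * Real.sin θ ^ 2))) θ := by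
  have hs : Real.sin θ > 0 := Real.sin_pos_of_pos_of_lt_pi hθ.1 hθ.2
  have h2s : (2 * Real.sin θ) ≠ 0 := by positivity
  have h := (Real.hasDerivAt_cos θ).div ((Real.hasDerivAt_sin θ).const_mul 2) h2s
  refine h.congr_deriv ?_
  have hpy := Real.sin_sq_add_cos_sq θ
  field_simp
  linear_combination -hpy

lemma normsq_hasDerivAt {θ : ℝ} (h : HasDerivAt g (deriv g θ) θ) :
    HasDerivAt (fun t => ‖g t‖ ^ 2)
      (2 * ((starRingEnd ℂ) (g θ) * deriv g θ).re) θ := by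
  have hconj : HasDerivAt (fun t => (starRingEnd ℂ) (g t))
      ((starRingEnd ℂ) (deriv g θ)) θ := h.star
  have hmul := hconj.mul h
  have hre := Complex.reCLM.hasFDerivAt.comp_hasDerivAt θ hmul
  have key : ∀ t, ‖g t‖ ^ 2 = Complex.reCLM ((starRingEnd ℂ) (g t) * g t) := by
    intro t; exact norm_sq_eq (g t)
  rw [show (fun t => ‖g t‖ ^ 2) = fun t => Complex.reCLM ((starRingEnd ℂ) (g t) * g t) from
    funext key]
  refine hre.congr_deriv ?_
  have hswap : ((starRingEnd ℂ) (deriv g θ) * g θ).re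
      = ((starRingEnd ℂ) (g θ) * deriv g θ).re := by
    simp only [Complex.mul_re, Complex.conj_re, Complex.conj_im]; ring
  simp only [map_add, Complex.reCLM_apply, Complex.add_re, hswap]
  ring

/-- The key pointwise algebraic identity. -/
lemma pointwise_identity {s c : ℝ} (hs : s ≠ 0) (hsc : s ^ 2 + c ^ 2 = 1)
    (a b : ℂ) :
    ‖b‖ ^ 2 - ((1 / 4) * (‖a‖ ^ 2 / s ^ 2) + (1 / 4) * ‖a‖ ^ 2)
      = ‖b - ((c / (2 * s) : ℝ) : ℂ) * a‖ ^ 2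
        + (-(1 / (2 * s ^ 2)) * ‖a‖ ^ 2
            + (c / (2 * s)) * (2 * ((starRingEnd ℂ) a * b).re)) := by
  simp only [norm_sq_eq, Complex.mul_re, Complex.conj_re, Complex.conj_im,
    Complex.sub_re, Complex.sub_im, Complex.mul_im, Complex.ofReal_re,
    Complex.ofReal_im]
  have hc : c ^ 2 = 1 - s ^ 2 := by linarith
  field_simp
  linear_combination (-4 * (a.re ^ 2 + a.im ^ 2)) * hc

end HardyAux

open HardyAux

/-- Hardy inequality with trigonometric weight on `(0, π)`: for every smooth complex-valued
function `g` whose support is a compact subset of the open interval `(0, π)`,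
`∫₀^π |g'|² ≥ (1/4) ∫₀^π |g|²/sin²θ + (1/4) ∫₀^π |g|²`. -/
theorem hardy_inequality_sine_weight (g : ℝ → ℂ)
    (hg : ContDiffOn ℝ (⊤ : ℕ∞) g (Ioo 0 π))
    (hsupp : IsCompact (tsupport g)) (hsupp' : tsupport g ⊆ Ioo 0 π) :
    ∫ θ in Ioo 0 π, ‖deriv g θ‖ ^ 2 ≥
      (1 / 4) * ∫ θ in Ioo 0 π, ‖g θ‖ ^ 2 / Real.sin θ ^ 2
        + (1 / 4) * ∫ θ in Ioo 0 π, ‖g θ‖ ^ 2 := by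
  have hUopen : IsOpen (Ioo 0 π) := isOpen_Ioo
  set K := tsupport g with hK
  have hKc : IsClosed K := isClosed_tsupport g
  -- basic zero facts outside the support
  have hg0 : ∀ θ ∉ K, g θ = 0 := fun θ hθ => image_eq_zero_of_notMem_tsupport hθ
  have hevt0 : ∀ θ ∉ K, g =ᶠ[nhds θ] 0 := fun θ hθ =>
    notMem_tsupport_iff_eventuallyEq.mp hθ
  -- g is differentiable everywhere with derivative deriv g
  have hd : ∀ θ, HasDerivAt g (deriv g θ) θ := by
    intro θ
    by_cases hθ : θ ∈ Ioo 0 π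
    · exact ((hg.differentiableOn (by simp)).differentiableAt
        (hUopen.mem_nhds hθ)).hasDerivAt
    · have hθK : θ ∉ K := fun h => hθ (hsupp' h)
      have h0 : HasDerivAt g 0 θ :=
        (hasDerivAt_const θ (0 : ℂ)).congr_of_eventuallyEq (hevt0 θ hθK)
      have : deriv g θ = 0 := by
        rw [(hevt0 θ hθK).deriv_eq]; exact deriv_const θ 0
      rw [this]; exact h0
  have hdz : ∀ θ ∉ K, deriv g θ = 0 := by
    intro θ hθ
    rw [(hevt0 θ hθ).deriv_eq]; exact deriv_const θ 0
  -- continuity of deriv g on (0, π)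
  have hdc : ContinuousOn (deriv g) (Ioo 0 π) := by
    exact hg.continuousOn_deriv_of_isOpen hUopen (by simp)
  have hgc : Continuous g := by
    rw [continuous_iff_continuousAt]
    intro θ
    by_cases hθ : θ ∈ Ioo 0 π
    · exact (hg.continuousOn.continuousAt (hUopen.mem_nhds hθ))
    · have hθK : θ ∉ K := fun h => hθ (hsupp' h)
      exact (continuousAt_const (y := (0:ℂ))).congr (hevt0 θ hθK).symm
  -- a helper: continuous real functions vanishing outside K
  have cont_of : ∀ f : ℝ → ℝ, ContinuousOn f (Ioo 0 π) → (∀ θ ∉ K, f θ = 0) →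
      Continuous f := by
    intro f hf h0
    rw [continuous_iff_continuousAt]
    intro θ
    by_cases hθ : θ ∈ Ioo 0 π
    · exact hf.continuousAt (hUopen.mem_nhds hθ)
    · have hθK : θ ∉ K := fun h => hθ (hsupp' h)
      have : f =ᶠ[nhds θ] (fun _ => 0) := by
        filter_upwards [hKc.isOpen_compl.mem_nhds hθK] with t ht using h0 t ht
      exact (continuousAt_const (y := (0:ℝ))).congr this.symm
  have int_of : ∀ f : ℝ → ℝ, Continuous f → (∀ θ ∉ K, f θ = 0) →
      IntegrableOn f (Ioo 0 π) := by
    intro f hf h0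
    exact (hf.integrable_of_hasCompactSupport
      (HasCompactSupport.intro hsupp h0)).integrableOn
  -- sin positive on the interval
  have hsinpos : ∀ θ ∈ Ioo (0:ℝ) π, 0 < Real.sin θ := fun θ hθ =>
    Real.sin_pos_of_pos_of_lt_pi hθ.1 hθ.2
  -- F has derivative DD everywhere
  have hFd : ∀ θ, HasDerivAt (FF g) (DD g θ) θ := by
    intro θ
    by_cases hθ : θ ∈ Ioo 0 π
    · exact (phi_hasDerivAt hθ).mul (normsq_hasDerivAt g (hd θ))
    · have hθK : θ ∉ K := fun h => hθ (hsupp' h)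
      have hDD0 : DD g θ = 0 := by
        simp [DD, hg0 θ hθK, hdz θ hθK]
      have hF0 : FF g =ᶠ[nhds θ] (fun _ => 0) := by
        filter_upwards [hKc.isOpen_compl.mem_nhds hθK] with t ht
        simp [FF, hg0 t ht]
      rw [hDD0]
      exact (hasDerivAt_const θ (0:ℝ)).congr_of_eventuallyEq hF0
  -- continuity of the various integrands
  have hDDz : ∀ θ ∉ K, DD g θ = 0 := by
    intro θ hθ; simp [DD, hg0 θ hθ, hdz θ hθ]
  have hDDc : Continuous (DD g) := by
    apply cont_of _ _ hDDz
    apply ContinuousOn.add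
    · apply ContinuousOn.mul
      · apply ContinuousOn.neg
        apply ContinuousOn.div continuousOn_const
        · exact (Real.continuous_sin.continuousOn.pow 2).const_smul 2 |>.congr
            (fun θ _ => by rw [Pi.smul_apply, Pi.pow_apply, nsmul_eq_mul]; push_cast; ring)
        · intro θ hθ
          have := hsinpos θ hθ; positivity
      · exact (hgc.norm.pow 2).continuousOn
    · apply ContinuousOn.mul
      · apply ContinuousOn.div Real.continuous_cos.continuousOn
        · exact (continuous_const.mul Real.continuous_sin).continuousOn
        · intro θ hθ
          have := hsinpos θ hθ; positivity
      · apply ContinuousOn.mul continuousOn_const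
        apply Complex.continuous_re.comp_continuousOn
        exact ((Complex.continuous_conj.comp hgc).continuousOn.mul hdc)
  -- the integral of DD over (0, π) vanishes
  have hDDint : ∫ θ in Ioo 0 π, DD g θ = 0 := by
    have h0 : (0:ℝ) ∉ K := fun h => by
      have := hsupp' h; exact lt_irrefl 0 this.1
    have hπ : π ∉ K := fun h => by
      have := hsupp' h; exact lt_irrefl π this.2
    have key : ∫ θ in (0:ℝ)..π, DD g θ = FF g π - FF g 0 :=
      intervalIntegral.integral_eq_sub_of_hasDerivAt
        (fun θ _ => hFd θ)
        ((hDDc.intervalIntegrable 0 π))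
    rw [← MeasureTheory.integral_Ioc_eq_integral_Ioo,
      ← intervalIntegral.integral_of_le Real.pi_pos.le, key]
    simp [FF, hg0 0 h0, hg0 π hπ]
  -- integrands
  set h1 : ℝ → ℝ := fun θ => ‖deriv g θ‖ ^ 2 with hh1
  set h2 : ℝ → ℝ := fun θ => ‖g θ‖ ^ 2 / Real.sin θ ^ 2 with hh2
  set h3 : ℝ → ℝ := fun θ => ‖g θ‖ ^ 2 with hh3
  set h4 : ℝ → ℝ := fun θ => ‖deriv g θ - ((phi θ : ℝ) : ℂ) * g θ‖ ^ 2 with hh4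
  have hdcont : Continuous (deriv g) := by
    rw [continuous_iff_continuousAt]
    intro θ
    by_cases hθ : θ ∈ Ioo 0 π
    · exact hdc.continuousAt (hUopen.mem_nhds hθ)
    · have hθK : θ ∉ K := fun h => hθ (hsupp' h)
      have : deriv g =ᶠ[nhds θ] (fun _ => 0) := by
        filter_upwards [hKc.isOpen_compl.mem_nhds hθK] with t ht using hdz t ht
      exact (continuousAt_const (y := (0:ℂ))).congr this.symm
  have hi1 : IntegrableOn h1 (Ioo 0 π) :=
    int_of _ (hdcont.norm.pow 2) (fun θ hθ => by simp [hh1, hdz θ hθ])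
  have hi2 : IntegrableOn h2 (Ioo 0 π) := by
    apply int_of _ _ (fun θ hθ => by simp [hh2, hg0 θ hθ])
    apply cont_of _ _ (fun θ hθ => by simp [hh2, hg0 θ hθ])
    apply ContinuousOn.div (hgc.norm.pow 2).continuousOn
      (Real.continuous_sin.pow 2).continuousOn
    intro θ hθ
    rw [Pi.pow_apply]
    have := hsinpos θ hθ; positivity
  have hi3 : IntegrableOn h3 (Ioo 0 π) :=
    int_of _ (hgc.norm.pow 2) (fun θ hθ => by simp [hh3, hg0 θ hθ])
  have hi4 : IntegrableOn h4 (Ioo 0 π) := by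
    apply int_of _ _ (fun θ hθ => by simp [hh4, hg0 θ hθ, hdz θ hθ])
    apply cont_of _ _ (fun θ hθ => by simp [hh4, hg0 θ hθ, hdz θ hθ])
    apply ContinuousOn.pow
    apply ContinuousOn.norm
    apply ContinuousOn.sub hdc
    apply ContinuousOn.mul _ hgc.continuousOn
    apply Complex.continuous_ofReal.comp_continuousOn
    apply ContinuousOn.div Real.continuous_cos.continuousOn
      (continuous_const.mul Real.continuous_sin).continuousOn
    intro θ hθ
    show 2 * Real.sin θ ≠ 0
    have := hsinpos θ hθ; positivity
  have hiDD : IntegrableOn (DD g) (Ioo 0 π) := int_of _ hDDc hDDz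
  -- pointwise identity on (0, π)
  have hpt : ∀ θ ∈ Ioo (0:ℝ) π,
      h1 θ - ((1/4) * h2 θ + (1/4) * h3 θ) = h4 θ + DD g θ := by
    intro θ hθ
    have hs : Real.sin θ ≠ 0 := (hsinpos θ hθ).ne'
    have := pointwise_identity (c := Real.cos θ) hs
      (Real.sin_sq_add_cos_sq θ) (g θ) (deriv g θ)
    simpa [hh1, hh2, hh3, hh4, phi, DD, div_eq_mul_inv] using this
  -- integrate the identity
  have hsplit : ∫ θ in Ioo 0 π, (h1 θ - ((1/4) * h2 θ + (1/4) * h3 θ))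
      = ∫ θ in Ioo 0 π, (h4 θ + DD g θ) :=
    setIntegral_congr_fun measurableSet_Ioo hpt
  have hL : ∫ θ in Ioo 0 π, (h1 θ - ((1/4) * h2 θ + (1/4) * h3 θ))
      = (∫ θ in Ioo 0 π, h1 θ)
        - ((1/4) * (∫ θ in Ioo 0 π, h2 θ) + (1/4) * (∫ θ in Ioo 0 π, h3 θ)) := by
    have hq : IntegrableOn (fun θ => (1/4) * h2 θ + (1/4) * h3 θ) (Ioo 0 π) := by
      exact (hi2.const_mul _).add (hi3.const_mul _)
    rw [integral_sub hi1 hq, integral_add (hi2.const_mul _) (hi3.const_mul _),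
      integral_const_mul, integral_const_mul]
  have hR : ∫ θ in Ioo 0 π, (h4 θ + DD g θ)
      = (∫ θ in Ioo 0 π, h4 θ) + ∫ θ in Ioo 0 π, DD g θ :=
    integral_add hi4 hiDD
  have h4nn : 0 ≤ ∫ θ in Ioo 0 π, h4 θ :=
    setIntegral_nonneg measurableSet_Ioo (fun θ _ => by positivity)
  have : (∫ θ in Ioo 0 π, h1 θ)
      - ((1/4) * (∫ θ in Ioo 0 π, h2 θ) + (1/4) * (∫ θ in Ioo 0 π, h3 θ)) ≥ 0 := by
    rw [← hL, hsplit, hR, hDDint]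
    linarith
  have h3nn : 0 ≤ ∫ θ in Ioo 0 π, h3 θ :=
    setIntegral_nonneg measurableSet_Ioo (fun θ _ => by positivity)
  rw [ge_iff_le]
  rw [integral_add hi2 (integrableOn_const measure_Ioo_lt_top.ne),
    setIntegral_const, smul_eq_mul, Real.volume_real_Ioo_of_le Real.pi_pos.le, sub_zero]
  nlinarith [this, h3nn, Real.pi_le_four]

end
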